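/- For every real t, exp(t Ωy) * exp(-(π/2) Ωx) = exp((t - π/2) Ωy) * exp((π/2) Ωz) * exp((π/2) Ωy). -/

import Mathlib

/-!
Conjugation by the quarter turn `R = exp (-(π/2) Ωy)` carries `Ωz` to `-Ωx`, so
`exp (-(π/2) Ωx) = R exp ((π/2) Ωz) R⁻¹`; the factor `R` then merges with `exp (t Ωy)` and
`R⁻¹ = exp ((π/2) Ωy)`. The entries of `exp (±(π/2) Ωy)` come from Rodrigues' formula
`exp (s A) = 1 + sin s A + (1 - cos s) A²`, valid whenever `A³ = -A`.
-/

open Real Matrix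

noncomputable section

def Ox : Matrix (Fin 3) (Fin 3) ℝ := !![0,0,0; 0,0,-1; 0,1,0]
def Oy : Matrix (Fin 3) (Fin 3) ℝ := !![0,0,1; 0,0,0; -1,0,0]
def Oz : Matrix (Fin 3) (Fin 3) ℝ := !![0,-1,0; 1,0,0; 0,0,0]

open scoped Nat

section Rodrigues

variable {𝔸 : Type*} [Ring 𝔸] [Algebra ℝ 𝔸] {A : 𝔸}

theorem pow_two_mul_add_one_of_pow_three_eq_neg (hA : A ^ 3 = -A) (k : ℕ) :
    A ^ (2 * k + 1) = ((-1 : ℝ) ^ k) • A := by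
  induction k with
  | zero => simp
  | succ k ih =>
    rw [show 2 * (k + 1) + 1 = 2 * k + 1 + 2 by ring, pow_add, ih, smul_mul_assoc,
      ← pow_succ' A 2, hA, pow_succ, smul_neg, ← neg_smul, mul_neg_one]

theorem pow_two_mul_add_two_of_pow_three_eq_neg (hA : A ^ 3 = -A) (k : ℕ) :
    A ^ (2 * k + 2) = ((-1 : ℝ) ^ k) • A ^ 2 := by
  rw [pow_succ, pow_two_mul_add_one_of_pow_three_eq_neg hA, smul_mul_assoc, ← sq]

variable [TopologicalSpace 𝔸] [IsTopologicalRing 𝔸] [ContinuousSMul ℝ 𝔸] [T2Space 𝔸]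

theorem exp_smul_of_pow_three_eq_neg (hA : A ^ 3 = -A) (s : ℝ) :
    NormedSpace.exp (s • A) = 1 + sin s • A + (1 - cos s) • A ^ 2 := by
  -- the `k = 0` term of the cosine series contributes `-A ^ 2` instead of `1`; `1 + A ^ 2` fixes it
  have hEven : HasSum (fun k : ℕ => ((2 * k)! : ℝ)⁻¹ • (s • A) ^ (2 * k))
      (cos s • (-A ^ 2) + (1 + A ^ 2)) := by
    refine (((hasSum_cos s).smul_const (-A ^ 2)).add (hasSum_ite_eq 0 (1 + A ^ 2))).congr_fun ?_
    rintro (_ | k)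
    · simp
    · rw [if_neg k.succ_ne_zero, add_zero, smul_pow, mul_add_one,
        pow_two_mul_add_two_of_pow_three_eq_neg hA, smul_smul, smul_smul, smul_neg, ← neg_smul,
        pow_succ]
      congr 1
      ring
  have hOdd : HasSum (fun k : ℕ => ((2 * k + 1)! : ℝ)⁻¹ • (s • A) ^ (2 * k + 1)) (sin s • A) := by
    refine ((hasSum_sin s).smul_const A).congr_fun fun k => ?_
    rw [smul_pow, pow_two_mul_add_one_of_pow_three_eq_neg hA, smul_smul, smul_smul]
    congr 1
    ring
  rw [NormedSpace.exp_eq_tsum ℝ]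
  refine HasSum.tsum_eq ?_
  convert hEven.even_add_odd (f := fun n ↦ (n ! : ℝ)⁻¹ • (s • A) ^ n) hOdd using 1
  rw [sub_smul, one_smul, smul_neg]
  abel

end Rodrigues

theorem Oy_pow_three : Oy ^ 3 = -Oy := by
  rw [pow_succ, pow_two, Oy]
  simp only [mul_fin_three, neg_of]
  norm_num

theorem exp_smul_Oy (s : ℝ) : NormedSpace.exp (s • Oy) = 1 + sin s • Oy + (1 - cos s) • Oy ^ 2 :=
  exp_smul_of_pow_three_eq_neg Oy_pow_three s

theorem exp_neg_pi_div_two_smul_Oy_mul_Oz_mul_exp :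
    NormedSpace.exp ((-(π / 2)) • Oy) * Oz * NormedSpace.exp ((π / 2) • Oy) = -Ox := by
  rw [exp_smul_Oy, exp_smul_Oy, sin_neg, cos_neg, sin_pi_div_two, cos_pi_div_two, pow_two,
    Ox, Oy, Oz]
  simp only [one_fin_three, smul_of, of_add_of, mul_fin_three, neg_of]
  ext i j
  fin_cases i <;> fin_cases j <;> norm_num

theorem stmt_13 (t : ℝ) :
    NormedSpace.exp (t • Oy) * NormedSpace.exp ((-(π / 2)) • Ox) =
      NormedSpace.exp ((t - π / 2) • Oy) * NormedSpace.exp ((π / 2) • Oz) *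
        NormedSpace.exp ((π / 2) • Oy) := by
  set R := NormedSpace.exp ((-(π / 2)) • Oy)
  have hRinv : R⁻¹ = NormedSpace.exp ((π / 2) • Oy) := by
    rw [← Matrix.exp_neg, neg_smul, neg_neg]
  have hconj : (-(π / 2)) • Ox = R * ((π / 2) • Oz) * R⁻¹ := by
    rw [hRinv, mul_smul_comm, smul_mul_assoc, exp_neg_pi_div_two_smul_Oy_mul_Oz_mul_exp,
      smul_neg, neg_smul]
  have hsplit : NormedSpace.exp ((t - π / 2) • Oy) = NormedSpace.exp (t • Oy) * R := by
    rw [sub_eq_add_neg, add_smul, Matrix.exp_add_of_commute]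
    exact ((Commute.refl Oy).smul_left t).smul_right _
  calc NormedSpace.exp (t • Oy) * NormedSpace.exp ((-(π / 2)) • Ox)
      = NormedSpace.exp (t • Oy) * (R * NormedSpace.exp ((π / 2) • Oz) * R⁻¹) := by
        rw [hconj, Matrix.exp_conj _ _ (Matrix.isUnit_exp _)]
    _ = NormedSpace.exp (t • Oy) * R * NormedSpace.exp ((π / 2) • Oz) * R⁻¹ := by
        simp only [mul_assoc]
    _ = _ := by rw [hsplit, hRinv]
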